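/- Let ρ be an elliptic N-function. Then for each δ > 0 there exists C_δ ≥ 1 depending only on δ and the characteristics of ρ such that for all a ∈ ℝⁿ and t ≥ 0: (i) ρ_{|a|}(t) ≤ C_δ ρ(t) + δ ρ(|a|), and (ii) ρ(t) ≤ C_δ ρ_{|a|}(t) + δ ρ(|a|). -/

import Mathlib

open Set Filter

/-- An N-function: strictly increasing and convex on `[0,∞)`, vanishing at `0`,
with `ρ(t)/t → 0` as `t → 0⁺` and `t/ρ(t) → 0` as `t → ∞`. -/
def IsNFunction (ρ : ℝ → ℝ) : Prop :=
  ρ 0 = 0 ∧ StrictMonoOn ρ (Ici 0) ∧ ConvexOn ℝ (Ici 0) ρ ∧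
    Tendsto (fun t => ρ t / t) (nhdsWithin 0 (Ioi 0)) (nhds 0) ∧
    Tendsto (fun t => t / ρ t) atTop (nhds 0)

/-- The conjugate (Young/Legendre) function `ρ*(t) = sup_{s ≥ 0} (s t − ρ s)`. -/
noncomputable def conjN (ρ : ℝ → ℝ) (t : ℝ) : ℝ :=
  sSup {y | ∃ s ≥ 0, y = s * t - ρ s}

/-- The shifted N-function `ρ_a(t) = ∫₀ᵗ ρ'(a+τ)/(a+τ) · τ dτ`. -/
noncomputable def shiftN (ρ : ℝ → ℝ) (a : ℝ) (t : ℝ) : ℝ :=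
  ∫ τ in (0:ℝ)..t, deriv ρ (a + τ) / (a + τ) * τ

/-- An elliptic N-function with characteristics `c₁, c₂`: `C¹` on `[0,∞)`,
`C²` on `(0,∞)`, and `ρ'(t) ∼ t ρ''(t)` uniformly in `t > 0`. -/
def IsElliptic (ρ : ℝ → ℝ) (c₁ c₂ : ℝ) : Prop :=
  ContDiffOn ℝ 1 ρ (Ici 0) ∧ ContDiffOn ℝ 2 ρ (Ioi 0) ∧
    ∀ t > 0, c₁ * deriv ρ t ≤ t * deriv (deriv ρ) t ∧
      t * deriv (deriv ρ) t ≤ c₂ * deriv ρ t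

/-!
Write `φ = ρ'`. Convexity makes `φ` nondecreasing with `ρ(t) ≤ t φ(t)`, and the upper
ellipticity bound makes `t^(-c₂) φ(t)` nonincreasing, so `φ` is doubling and `t φ(t) ≂ ρ(t)`.
Bounding the integrand of `ρ_a` pointwise gives `ρ_a(t) ≂ t φ(t) ≂ ρ(t)` for `t ≥ a` and
`ρ_a(t) ≂ φ(a) t² / a` for `t ≤ a`. In the latter regime, if `t ≤ θ a` the quantities in play are
of order `θ a φ(a) ≂ θ ρ(a)` and go into `δ ρ(a)`; if `θ a < t ≤ a`, then `a / t < 1 / θ` and the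
growth bound compares `φ(a)` with `φ(t)`.
-/

namespace IsNFunction

variable {ρ : ℝ → ℝ} {s t : ℝ}

lemma nonneg (hN : IsNFunction ρ) (ht : 0 ≤ t) : 0 ≤ ρ t :=
  hN.1 ▸ hN.2.1.monotoneOn self_mem_Ici ht ht

lemma monotoneOn_deriv (hN : IsNFunction ρ) (hd : DifferentiableOn ℝ ρ (Ioi 0)) :
    MonotoneOn (deriv ρ) (Ioi 0) :=
  (hN.2.2.1.subset Ioi_subset_Ici_self (convex_Ioi 0)).monotoneOn_deriv
    fun _ hx ↦ hd.differentiableAt (Ioi_mem_nhds hx)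

lemma le_mul_deriv (hN : IsNFunction ρ) (hd : DifferentiableOn ℝ ρ (Ioi 0)) (ht : 0 < t) :
    ρ t ≤ t * deriv ρ t := by
  have h := hN.2.2.1.slope_le_deriv self_mem_Ici ht.le ht (hd.differentiableAt (Ioi_mem_nhds ht))
  rwa [slope_def_field, hN.1, sub_zero, sub_zero, div_le_iff₀ ht, mul_comm] at h

lemma deriv_nonneg (hN : IsNFunction ρ) (hd : DifferentiableOn ℝ ρ (Ioi 0)) (ht : 0 < t) :
    0 ≤ deriv ρ t :=
  nonneg_of_mul_nonneg_right ((hN.nonneg ht.le).trans (hN.le_mul_deriv hd ht)) ht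

lemma le_mul_deriv_of_le (hN : IsNFunction ρ) (hd : DifferentiableOn ℝ ρ (Ioi 0)) (ht : 0 ≤ t)
    (hs : 0 < s) (hts : t ≤ s) : ρ t ≤ t * deriv ρ s := by
  rcases ht.eq_or_lt with rfl | ht
  · simp [hN.1]
  · exact (hN.le_mul_deriv hd ht).trans
      (mul_le_mul_of_nonneg_left (hN.monotoneOn_deriv hd ht hs hts) ht.le)

lemma half_mul_deriv_half_le (hN : IsNFunction ρ) (hd : DifferentiableOn ℝ ρ (Ioi 0))
    (ht : 0 < t) : t / 2 * deriv ρ (t / 2) ≤ ρ t := by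
  have ht2 : 0 < t / 2 := half_pos ht
  have h := hN.2.2.1.deriv_le_slope ht2.le ht.le (half_lt_self ht)
    (hd.differentiableAt (Ioi_mem_nhds ht2))
  rw [slope_def_field, le_div_iff₀ (by linarith)] at h
  linarith [hN.nonneg ht2.le]

end IsNFunction

namespace IsElliptic

variable {ρ : ℝ → ℝ} {c₁ c₂ s r t : ℝ}

lemma differentiableOn (hE : IsElliptic ρ c₁ c₂) : DifferentiableOn ℝ ρ (Ioi 0) :=
  hE.2.1.differentiableOn (by norm_num)

lemma continuousOn_deriv (hE : IsElliptic ρ c₁ c₂) : ContinuousOn (deriv ρ) (Ioi 0) :=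
  hE.2.1.continuousOn_deriv_of_isOpen isOpen_Ioi (by norm_num)

lemma hasDerivAt_deriv (hE : IsElliptic ρ c₁ c₂) (ht : 0 < t) :
    HasDerivAt (deriv ρ) (deriv (deriv ρ) t) t :=
  (((hE.2.1.deriv_of_isOpen isOpen_Ioi le_rfl).differentiableOn one_ne_zero).differentiableAt
    (Ioi_mem_nhds ht)).hasDerivAt

lemma deriv_le_rpow_mul (hE : IsElliptic ρ c₁ c₂) (hs : 0 < s) (hsr : s ≤ r) :
    deriv ρ r ≤ (r / s) ^ c₂ * deriv ρ s := by
  have hr : 0 < r := hs.trans_le hsr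
  have hderiv : ∀ x ∈ Ioi (0:ℝ), HasDerivAt (fun x ↦ x ^ (-c₂) * deriv ρ x)
      (x ^ (-c₂) / x * (x * deriv (deriv ρ) x - c₂ * deriv ρ x)) x := by
    intro x hx
    have hx0 : x ≠ 0 := ne_of_gt hx
    refine ((Real.hasDerivAt_rpow_const (Or.inl hx0)).mul
      (hE.hasDerivAt_deriv hx)).congr_deriv ?_
    rw [Real.rpow_sub_one hx0]
    field_simp
    ring
  have hanti : AntitoneOn (fun x ↦ x ^ (-c₂) * deriv ρ x) (Ioi 0) := by
    refine antitoneOn_of_hasDerivWithinAt_nonpos (convex_Ioi 0)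
      (f' := fun x ↦ x ^ (-c₂) / x * (x * deriv (deriv ρ) x - c₂ * deriv ρ x))
      (fun x hx ↦ (hderiv x hx).continuousAt.continuousWithinAt) (fun x hx ↦ ?_) fun x hx ↦ ?_
    · rw [interior_Ioi] at hx ⊢
      exact (hderiv x hx).hasDerivWithinAt
    · rw [interior_Ioi] at hx
      have hx : 0 < x := hx
      exact mul_nonpos_of_nonneg_of_nonpos (by positivity) (by linarith [(hE.2.2 x hx).2])
  have h := hanti hs hr hsr
  simp only [Real.rpow_neg hr.le, Real.rpow_neg hs.le] at h
  rw [Real.div_rpow hr.le hs.le]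
  have hrc : 0 < r ^ c₂ := Real.rpow_pos_of_pos hr c₂
  rw [inv_mul_le_iff₀ hrc] at h
  calc deriv ρ r ≤ r ^ c₂ * ((s ^ c₂)⁻¹ * deriv ρ s) := h
    _ = r ^ c₂ / s ^ c₂ * deriv ρ s := by ring

lemma deriv_two_mul_le (hE : IsElliptic ρ c₁ c₂) (hs : 0 < s) :
    deriv ρ (2 * s) ≤ 2 ^ c₂ * deriv ρ s := by
  simpa [hs.ne'] using hE.deriv_le_rpow_mul hs (by linarith : s ≤ 2 * s)

lemma mul_deriv_le (hE : IsElliptic ρ c₁ c₂) (hN : IsNFunction ρ) (ht : 0 < t) :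
    t * deriv ρ t ≤ 2 * 2 ^ c₂ * ρ t := by
  have hdouble := hE.deriv_two_mul_le (half_pos ht)
  rw [mul_div_cancel₀ t two_ne_zero] at hdouble
  calc t * deriv ρ t ≤ t * (2 ^ c₂ * deriv ρ (t / 2)) :=
        mul_le_mul_of_nonneg_left hdouble ht.le
    _ = 2 * 2 ^ c₂ * (t / 2 * deriv ρ (t / 2)) := by ring
    _ ≤ 2 * 2 ^ c₂ * ρ t :=
        mul_le_mul_of_nonneg_left (hN.half_mul_deriv_half_le hE.differentiableOn ht)
          (by positivity)

end IsElliptic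

section Shift

variable {ρ : ℝ → ℝ} {c₁ c₂ a s t : ℝ}

lemma shiftN_zero (hN : IsNFunction ρ) (hE : IsElliptic ρ c₁ c₂) (ht : 0 ≤ t) :
    shiftN ρ 0 t = ρ t := by
  have hcont : ContinuousOn (derivWithin ρ (Ici 0)) (Ici 0) :=
    hE.1.continuousOn_derivWithin (uniqueDiffOn_Ici 0) le_rfl
  have hderivWithin : ∀ x ∈ Ioi (0:ℝ), derivWithin ρ (Ici 0) x = deriv ρ x :=
    fun x hx ↦ derivWithin_of_mem_nhds (Ici_mem_nhds hx)
  have hftc : ∫ x in (0:ℝ)..t, derivWithin ρ (Ici 0) x = ρ t - ρ 0 :=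
    intervalIntegral.integral_eq_sub_of_hasDeriv_right_of_le ht
      (hE.1.continuousOn.mono Icc_subset_Ici_self)
      (fun x hx ↦ hderivWithin x hx.1 ▸ ((hE.differentiableOn x hx.1).differentiableAt
        (Ioi_mem_nhds hx.1)).hasDerivAt.hasDerivWithinAt)
      ((hcont.mono (by rw [uIcc_of_le ht]; exact Icc_subset_Ici_self)).intervalIntegrable)
  rw [hN.1, sub_zero] at hftc
  rw [shiftN, ← hftc]
  refine intervalIntegral.integral_congr_ae (MeasureTheory.ae_of_all _ fun x hx ↦ ?_)
  rw [uIoc_of_le ht] at hx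
  rw [zero_add, div_mul_cancel₀ _ (ne_of_gt hx.1), hderivWithin x hx.1]

lemma shiftN_nonneg (hN : IsNFunction ρ) (hE : IsElliptic ρ c₁ c₂) (ha : 0 ≤ a) (ht : 0 ≤ t) :
    0 ≤ shiftN ρ a t := by
  refine intervalIntegral.integral_nonneg ht fun τ hτ ↦ ?_
  rcases hτ.1.eq_or_lt with rfl | hτ0
  · simp
  have haτ : 0 < a + τ := by linarith
  exact mul_nonneg (div_nonneg (hN.deriv_nonneg hE.differentiableOn haτ) haτ.le) hτ0.le

lemma intervalIntegrable_shiftN_integrand (hE : IsElliptic ρ c₁ c₂) (ha : 0 < a) (hs : 0 ≤ s)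
    (ht : 0 ≤ t) :
    IntervalIntegrable (fun τ ↦ deriv ρ (a + τ) / (a + τ) * τ) MeasureTheory.volume s t := by
  refine ContinuousOn.intervalIntegrable fun τ hτ ↦ ?_
  have hτ : 0 ≤ τ := (le_min hs ht).trans hτ.1
  have haτ : 0 < a + τ := by linarith
  refine (ContinuousAt.mul (ContinuousAt.div ?_ (by fun_prop) haτ.ne') continuousAt_id)
    |>.continuousWithinAt
  exact (hE.continuousOn_deriv.continuousAt (Ioi_mem_nhds haτ)).comp (by fun_prop)

lemma shiftN_le_mul_deriv (hN : IsNFunction ρ) (hE : IsElliptic ρ c₁ c₂) (ha : 0 < a)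
    (hat : a ≤ t) : shiftN ρ a t ≤ 2 ^ c₂ * (t * deriv ρ t) := by
  have ht : 0 < t := ha.trans_le hat
  have hconst : ∫ _ in (0:ℝ)..t, 2 ^ c₂ * deriv ρ t = 2 ^ c₂ * (t * deriv ρ t) := by
    rw [intervalIntegral.integral_const, smul_eq_mul]; ring
  rw [shiftN, ← hconst]
  refine intervalIntegral.integral_mono_on ht.le
    (intervalIntegrable_shiftN_integrand hE ha le_rfl ht.le) intervalIntegrable_const
    fun τ hτ ↦ ?_
  have haτ : 0 < a + τ := by linarith [hτ.1]
  calc deriv ρ (a + τ) / (a + τ) * τ = deriv ρ (a + τ) * (τ / (a + τ)) := by ring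
    _ ≤ deriv ρ (a + τ) * 1 := mul_le_mul_of_nonneg_left
        ((div_le_one haτ).2 (by linarith)) (hN.deriv_nonneg hE.differentiableOn haτ)
    _ ≤ deriv ρ (2 * t) := by
        rw [mul_one]
        exact hN.monotoneOn_deriv hE.differentiableOn haτ (by simp; linarith) (by linarith [hτ.2])
    _ ≤ 2 ^ c₂ * deriv ρ t := hE.deriv_two_mul_le ht

lemma mul_deriv_le_shiftN (hN : IsNFunction ρ) (hE : IsElliptic ρ c₁ c₂) (ha : 0 < a)
    (hat : a ≤ t) : t * deriv ρ t ≤ 8 * 2 ^ c₂ * shiftN ρ a t := by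
  have ht : 0 < t := ha.trans_le hat
  have ht2 : 0 < t / 2 := half_pos ht
  have hsplit : shiftN ρ a t = (∫ τ in (0:ℝ)..(t / 2), deriv ρ (a + τ) / (a + τ) * τ)
      + ∫ τ in (t / 2)..t, deriv ρ (a + τ) / (a + τ) * τ :=
    (intervalIntegral.integral_add_adjacent_intervals
      (intervalIntegrable_shiftN_integrand hE ha le_rfl ht2.le)
      (intervalIntegrable_shiftN_integrand hE ha ht2.le ht.le)).symm
  have hfirst : 0 ≤ ∫ τ in (0:ℝ)..(t / 2), deriv ρ (a + τ) / (a + τ) * τ := by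
    simpa only [shiftN] using shiftN_nonneg hN hE ha.le ht2.le
  -- on `[t/2, t]` we have `τ / (a + τ) ≥ 1/4` because `a ≤ t ≤ 2τ`
  have hsecond : t / 2 * (deriv ρ (t / 2) / 4)
      ≤ ∫ τ in (t / 2)..t, deriv ρ (a + τ) / (a + τ) * τ := by
    have hconst : ∫ _ in (t / 2)..t, deriv ρ (t / 2) / 4 = t / 2 * (deriv ρ (t / 2) / 4) := by
      rw [intervalIntegral.integral_const, smul_eq_mul]; ring
    rw [← hconst]
    refine intervalIntegral.integral_mono_on (by linarith) intervalIntegrable_const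
      (intervalIntegrable_shiftN_integrand hE ha ht2.le ht.le) fun τ hτ ↦ ?_
    have haτ : 0 < a + τ := by linarith [hτ.1]
    calc deriv ρ (t / 2) / 4 = deriv ρ (t / 2) * (1 / 4) := by ring
      _ ≤ deriv ρ (a + τ) * (τ / (a + τ)) :=
          mul_le_mul (hN.monotoneOn_deriv hE.differentiableOn ht2 haτ (by linarith [hτ.1]))
            ((div_le_div_iff₀ (by norm_num) haτ).2 (by linarith [hτ.1, hτ.2])) (by norm_num)
            (hN.deriv_nonneg hE.differentiableOn haτ)
      _ = deriv ρ (a + τ) / (a + τ) * τ := by ring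
  have hdouble := hE.deriv_two_mul_le ht2
  rw [mul_div_cancel₀ t two_ne_zero] at hdouble
  calc t * deriv ρ t ≤ t * (2 ^ c₂ * deriv ρ (t / 2)) := mul_le_mul_of_nonneg_left hdouble ht.le
    _ = 8 * 2 ^ c₂ * (t / 2 * (deriv ρ (t / 2) / 4)) := by ring
    _ ≤ 8 * 2 ^ c₂ * shiftN ρ a t :=
        mul_le_mul_of_nonneg_left (by linarith) (by positivity)

lemma shiftN_le_sq (hN : IsNFunction ρ) (hE : IsElliptic ρ c₁ c₂) (ha : 0 < a) (ht : 0 ≤ t)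
    (hta : t ≤ a) : shiftN ρ a t ≤ 2 ^ c₂ * deriv ρ a / a * (t ^ 2 / 2) := by
  have hlin : ∫ τ in (0:ℝ)..t, 2 ^ c₂ * deriv ρ a / a * τ
      = 2 ^ c₂ * deriv ρ a / a * (t ^ 2 / 2) := by
    rw [intervalIntegral.integral_const_mul, integral_id]; ring
  rw [shiftN, ← hlin]
  refine intervalIntegral.integral_mono_on ht
    (intervalIntegrable_shiftN_integrand hE ha le_rfl ht)
    ((continuous_const_mul _).intervalIntegrable _ _) fun τ hτ ↦ ?_
  have haτ : 0 < a + τ := by linarith [hτ.1]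
  have hφ : deriv ρ (a + τ) ≤ 2 ^ c₂ * deriv ρ a :=
    (hN.monotoneOn_deriv hE.differentiableOn haτ (by simp; linarith) (by linarith [hτ.2])).trans
      (hE.deriv_two_mul_le ha)
  refine mul_le_mul_of_nonneg_right ?_ hτ.1
  calc deriv ρ (a + τ) / (a + τ) ≤ deriv ρ (a + τ) / a :=
        div_le_div_of_nonneg_left (hN.deriv_nonneg hE.differentiableOn haτ) ha (by linarith [hτ.1])
    _ ≤ 2 ^ c₂ * deriv ρ a / a := div_le_div_of_nonneg_right hφ ha.le

lemma sq_le_shiftN (hN : IsNFunction ρ) (hE : IsElliptic ρ c₁ c₂) (ha : 0 < a) (ht : 0 ≤ t)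
    (hta : t ≤ a) : deriv ρ a / (2 * a) * (t ^ 2 / 2) ≤ shiftN ρ a t := by
  have hlin : ∫ τ in (0:ℝ)..t, deriv ρ a / (2 * a) * τ = deriv ρ a / (2 * a) * (t ^ 2 / 2) := by
    rw [intervalIntegral.integral_const_mul, integral_id]; ring
  rw [shiftN, ← hlin]
  refine intervalIntegral.integral_mono_on ht ((continuous_const_mul _).intervalIntegrable _ _)
    (intervalIntegrable_shiftN_integrand hE ha le_rfl ht) fun τ hτ ↦ ?_
  have haτ : 0 < a + τ := by linarith [hτ.1]
  refine mul_le_mul_of_nonneg_right (div_le_div₀ (hN.deriv_nonneg hE.differentiableOn haτ)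
    (hN.monotoneOn_deriv hE.differentiableOn ha haτ (by linarith [hτ.1])) haτ
    (by linarith [hτ.2])) hτ.1

end Shift

section RemovalOfShift

variable {ρ : ℝ → ℝ} {c₁ c₂ a t θ ε : ℝ}

lemma shiftN_le_of_le (hN : IsNFunction ρ) (hE : IsElliptic ρ c₁ c₂) (ha : 0 < a) (hat : a ≤ t) :
    shiftN ρ a t ≤ 2 * (2 ^ c₂) ^ 2 * ρ t :=
  calc shiftN ρ a t ≤ 2 ^ c₂ * (t * deriv ρ t) := shiftN_le_mul_deriv hN hE ha hat
    _ ≤ 2 ^ c₂ * (2 * 2 ^ c₂ * ρ t) :=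
        mul_le_mul_of_nonneg_left (hE.mul_deriv_le hN (ha.trans_le hat)) (by positivity)
    _ = 2 * (2 ^ c₂) ^ 2 * ρ t := by ring

lemma shiftN_le_of_ge (hN : IsNFunction ρ) (hE : IsElliptic ρ c₁ c₂) (hc₂ : 0 ≤ c₂)
    (hθ : 0 < θ) (ha : 0 < a) (ht : 0 ≤ t) (hta : t ≤ a) :
    shiftN ρ a t ≤ (2 ^ c₂) ^ 2 * θ⁻¹ ^ c₂ * ρ t + (2 ^ c₂) ^ 2 * θ * ρ a := by
  have hK : (0:ℝ) < 2 ^ c₂ := by positivity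
  have hρt := hN.nonneg ht
  have hρa := hN.nonneg ha.le
  have hsq := shiftN_le_sq hN hE ha ht hta
  have haφ := hE.mul_deriv_le hN ha
  rcases le_or_gt t (θ * a) with hsmall | hlarge
  · have ht2 : t ^ 2 ≤ θ * a * a := by nlinarith
    have hsmall : shiftN ρ a t ≤ (2 ^ c₂) ^ 2 * θ * ρ a :=
      calc shiftN ρ a t ≤ 2 ^ c₂ * deriv ρ a / a * (t ^ 2 / 2) := hsq
        _ ≤ 2 ^ c₂ * deriv ρ a / a * (θ * a * a / 2) :=
            mul_le_mul_of_nonneg_left (by linarith)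
              (div_nonneg (mul_nonneg hK.le (hN.deriv_nonneg hE.differentiableOn ha)) ha.le)
        _ = 2 ^ c₂ * θ / 2 * (a * deriv ρ a) := by field_simp
        _ ≤ 2 ^ c₂ * θ / 2 * (2 * 2 ^ c₂ * ρ a) :=
            mul_le_mul_of_nonneg_left haφ (by positivity)
        _ = (2 ^ c₂) ^ 2 * θ * ρ a := by ring
    linarith [mul_nonneg (by positivity : (0:ℝ) ≤ (2 ^ c₂) ^ 2 * θ⁻¹ ^ c₂) hρt]
  · have htpos : 0 < t := (mul_pos hθ ha).trans hlarge
    have hratio : a / t ≤ θ⁻¹ := by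
      rw [div_le_iff₀ htpos, inv_mul_eq_div, le_div_iff₀ hθ]; linarith
    have hφ : deriv ρ a ≤ θ⁻¹ ^ c₂ * deriv ρ t :=
      (hE.deriv_le_rpow_mul htpos hta).trans (mul_le_mul_of_nonneg_right
        (Real.rpow_le_rpow (by positivity) hratio hc₂) (hN.deriv_nonneg hE.differentiableOn htpos))
    have hlarge : shiftN ρ a t ≤ (2 ^ c₂) ^ 2 * θ⁻¹ ^ c₂ * ρ t :=
      calc shiftN ρ a t ≤ 2 ^ c₂ * deriv ρ a / a * (t ^ 2 / 2) := hsq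
        _ = 2 ^ c₂ / 2 * (t / a) * (t * deriv ρ a) := by field_simp
        _ ≤ 2 ^ c₂ / 2 * 1 * (t * (θ⁻¹ ^ c₂ * deriv ρ t)) := by
            gcongr
            · exact mul_nonneg htpos.le (hN.deriv_nonneg hE.differentiableOn ha)
            · exact (div_le_one ha).2 hta
        _ = 2 ^ c₂ / 2 * θ⁻¹ ^ c₂ * (t * deriv ρ t) := by ring
        _ ≤ 2 ^ c₂ / 2 * θ⁻¹ ^ c₂ * (2 * 2 ^ c₂ * ρ t) :=
            mul_le_mul_of_nonneg_left (hE.mul_deriv_le hN htpos) (by positivity)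
        _ = (2 ^ c₂) ^ 2 * θ⁻¹ ^ c₂ * ρ t := by ring
    linarith [mul_nonneg (by positivity : (0:ℝ) ≤ (2 ^ c₂) ^ 2 * θ) hρa]

lemma shiftN_le_add (hN : IsNFunction ρ) (hE : IsElliptic ρ c₁ c₂) (hc₂ : 0 ≤ c₂)
    (hθ : 0 < θ) (hθ1 : θ ≤ 1) (ha : 0 ≤ a) (ht : 0 ≤ t) :
    shiftN ρ a t ≤ 2 * (2 ^ c₂) ^ 2 * θ⁻¹ ^ c₂ * ρ t + (2 ^ c₂) ^ 2 * θ * ρ a := by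
  have hρt := hN.nonneg ht
  have hρa := hN.nonneg ha
  have hK : 1 ≤ (2:ℝ) ^ c₂ := Real.one_le_rpow one_le_two hc₂
  have hθc : 1 ≤ θ⁻¹ ^ c₂ := Real.one_le_rpow (one_le_inv₀ hθ |>.2 hθ1) hc₂
  have hK2 : 1 ≤ (2 ^ c₂ : ℝ) ^ 2 := one_le_pow₀ hK
  have herr : 0 ≤ (2 ^ c₂) ^ 2 * θ * ρ a := by positivity
  rcases ha.eq_or_lt with rfl | ha
  · rw [shiftN_zero hN hE ht]
    nlinarith [mul_le_mul_of_nonneg_right (one_le_mul_of_one_le_of_one_le hK2 hθc) hρt]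
  rcases le_total a t with hat | hta
  · nlinarith [shiftN_le_of_le hN hE ha hat, mul_le_mul_of_nonneg_right hθc
      (mul_nonneg (by positivity : (0:ℝ) ≤ 2 * (2 ^ c₂) ^ 2) hρt)]
  · nlinarith [shiftN_le_of_ge hN hE hc₂ hθ ha ht hta,
      mul_nonneg (by positivity : (0:ℝ) ≤ (2 ^ c₂) ^ 2 * θ⁻¹ ^ c₂) hρt]

lemma le_shiftN_of_le (hN : IsNFunction ρ) (hE : IsElliptic ρ c₁ c₂) (ha : 0 < a) (hat : a ≤ t) :
    ρ t ≤ 8 * 2 ^ c₂ * shiftN ρ a t :=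
  (hN.le_mul_deriv hE.differentiableOn (ha.trans_le hat)).trans (mul_deriv_le_shiftN hN hE ha hat)

lemma le_shiftN_of_ge (hN : IsNFunction ρ) (hE : IsElliptic ρ c₁ c₂) (hε : 0 < ε)
    (ha : 0 < a) (ht : 0 ≤ t) (hta : t ≤ a) :
    ρ t ≤ 4 / ε * shiftN ρ a t + 2 * 2 ^ c₂ * ε * ρ a := by
  have hρt := hN.le_mul_deriv_of_le hE.differentiableOn ht ha hta
  have haφ := hE.mul_deriv_le hN ha
  have hφa := hN.deriv_nonneg hE.differentiableOn ha
  have hS := shiftN_nonneg hN hE ha.le ht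
  have hρa := hN.nonneg ha.le
  rcases le_or_gt t (ε * a) with hsmall | hlarge
  · have hsmall : ρ t ≤ 2 * 2 ^ c₂ * ε * ρ a :=
      calc ρ t ≤ t * deriv ρ a := hρt
        _ ≤ ε * (a * deriv ρ a) := by nlinarith
        _ ≤ ε * (2 * 2 ^ c₂ * ρ a) := mul_le_mul_of_nonneg_left haφ hε.le
        _ = 2 * 2 ^ c₂ * ε * ρ a := by ring
    linarith [mul_nonneg (by positivity : (0:ℝ) ≤ 4 / ε) hS]
  · have hlarge : ρ t ≤ 4 / ε * shiftN ρ a t :=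
      calc ρ t ≤ t * deriv ρ a := hρt
        _ ≤ t / (ε * a) * (t * deriv ρ a) :=
            le_mul_of_one_le_left (mul_nonneg ht hφa) ((one_le_div (by positivity)).2 hlarge.le)
        _ = 4 / ε * (deriv ρ a / (2 * a) * (t ^ 2 / 2)) := by field_simp; ring
        _ ≤ 4 / ε * shiftN ρ a t :=
            mul_le_mul_of_nonneg_left (sq_le_shiftN hN hE ha ht hta) (by positivity)
    linarith [mul_nonneg (by positivity : (0:ℝ) ≤ 2 * 2 ^ c₂ * ε) hρa]

lemma le_shiftN_add (hN : IsNFunction ρ) (hE : IsElliptic ρ c₁ c₂) (hc₂ : 0 ≤ c₂)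
    (hε : 0 < ε) (hε1 : ε ≤ 1) (ha : 0 ≤ a) (ht : 0 ≤ t) :
    ρ t ≤ 8 * 2 ^ c₂ / ε * shiftN ρ a t + 2 * 2 ^ c₂ * ε * ρ a := by
  have hK : 1 ≤ (2:ℝ) ^ c₂ := Real.one_le_rpow one_le_two hc₂
  have hC : 8 * 2 ^ c₂ ≤ 8 * 2 ^ c₂ / ε := le_div_self (by positivity) hε hε1
  have herr : 0 ≤ 2 * 2 ^ c₂ * ε * ρ a := mul_nonneg (by positivity) (hN.nonneg ha)
  have hS := shiftN_nonneg hN hE ha ht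
  rcases ha.eq_or_lt with rfl | ha
  · rw [shiftN_zero hN hE ht]
    nlinarith [hN.nonneg ht]
  rcases le_total a t with hat | hta
  · nlinarith [le_shiftN_of_le hN hE ha hat]
  · have h4 : 4 / ε ≤ 8 * 2 ^ c₂ / ε := div_le_div_of_nonneg_right (by linarith) hε.le
    nlinarith [le_shiftN_of_ge hN hE hε ha ht hta]

end RemovalOfShift

theorem statement7_general (n : ℕ) (ρ : ℝ → ℝ) (c₁ c₂ : ℝ) (hc₂ : 0 < c₂)
    (hN : IsNFunction ρ) (hE : IsElliptic ρ c₁ c₂) (δ : ℝ) (hδ : 0 < δ) :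
    ∃ C ≥ (1:ℝ), ∀ a : EuclideanSpace ℝ (Fin n), ∀ t ≥ (0:ℝ),
      shiftN ρ ‖a‖ t ≤ C * ρ t + δ * ρ ‖a‖ ∧
      ρ t ≤ C * shiftN ρ ‖a‖ t + δ * ρ ‖a‖ := by
  set K : ℝ := 2 ^ c₂
  have hK : 1 ≤ K := Real.one_le_rpow one_le_two hc₂.le
  set θ := min 1 (δ / K ^ 2)
  set ε := min 1 (δ / (2 * K))
  have hθ : 0 < θ := lt_min one_pos (by positivity)
  have hε : 0 < ε := lt_min one_pos (by positivity)
  have hθδ : K ^ 2 * θ ≤ δ := (le_div_iff₀' (by positivity)).1 (min_le_right _ _)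
  have hεδ : 2 * K * ε ≤ δ := (le_div_iff₀' (by positivity)).1 (min_le_right _ _)
  refine ⟨max (2 * K ^ 2 * θ⁻¹ ^ c₂) (8 * K / ε),
    le_max_of_le_right ((one_le_div hε).2 (by linarith [min_le_left 1 (δ / (2 * K))])),
    fun a t ht ↦ ⟨?_, ?_⟩⟩
  · have hρt := hN.nonneg ht
    have hρa := hN.nonneg (norm_nonneg a)
    nlinarith [shiftN_le_add hN hE hc₂.le hθ (min_le_left _ _) (norm_nonneg a) ht,
      le_max_left (2 * K ^ 2 * θ⁻¹ ^ c₂) (8 * K / ε)]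
  · have hS := shiftN_nonneg hN hE (norm_nonneg a) ht
    have hρa := hN.nonneg (norm_nonneg a)
    nlinarith [le_shiftN_add hN hE hc₂.le hε (min_le_left _ _) (norm_nonneg a) ht,
      le_max_right (2 * K ^ 2 * θ⁻¹ ^ c₂) (8 * K / ε)]

/-- Removal of shift. For an elliptic N-function `ρ` and every
`δ > 0` there is `C_δ ≥ 1` (depending only on `δ` and the characteristics of `ρ`)
such that for all `a ∈ ℝⁿ` and `t ≥ 0`:
`ρ_{|a|}(t) ≤ C_δ ρ(t) + δ ρ(|a|)` and `ρ(t) ≤ C_δ ρ_{|a|}(t) + δ ρ(|a|)`. -/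
theorem statement7 (n : ℕ) (ρ : ℝ → ℝ) (c₁ c₂ : ℝ) (hc₁ : 0 < c₁) (hc₂ : 0 < c₂)
    (hN : IsNFunction ρ) (hE : IsElliptic ρ c₁ c₂) (δ : ℝ) (hδ : 0 < δ) :
    ∃ C ≥ (1:ℝ), ∀ a : EuclideanSpace ℝ (Fin n), ∀ t ≥ (0:ℝ),
      shiftN ρ ‖a‖ t ≤ C * ρ t + δ * ρ ‖a‖ ∧
      ρ t ≤ C * shiftN ρ ‖a‖ t + δ * ρ ‖a‖ :=
  statement7_general n ρ c₁ c₂ hc₂ hN hE δ hδ
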